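/- Let n ≥ 1, let Λ = diag(λ₁,…,λₙ) be a diagonal complex n×n matrix with pairwise distinct diagonal entries, let D be a diagonal complex n×n matrix, let R be a complex n×n matrix with zero diagonal entries, and set A_∞ = D + (ΛR − RΛ). Then there exists a unique n×n matrix P̂ with entries in the ring ℂ[[z]] of formal power series, with constant term Iₙ, satisfying the identity of matrices over ℂ[[z]]: z²·(dP̂/dz) = (Λ + z·A_∞)·P̂ − P̂·(Λ + z·D). Moreover, the off-diagonal part of the coefficient of z in P̂ equals −R. -/

import Mathlib

/-!
Write `P = ∑ Pₘ zᵐ`. The equation `z² P' = (Λ + zA) P - P (Λ + zD)` says `[Λ, P₀] = 0` and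
`m Pₘ = [Λ, Pₘ₊₁] + A Pₘ - Pₘ D` for all `m`. As `[Λ, Y]ᵢⱼ = (λᵢ - λⱼ) Yᵢⱼ` with distinct `λᵢ`,
the equation for `m` fixes the off-diagonal part of `Pₘ₊₁`; on the diagonal of the equation for
`m + 1` the commutator drops out and `Aᵢᵢ = Dᵢᵢ`, so it fixes the diagonal of `Pₘ₊₁` from its
off-diagonal part. Starting from `P₀ = 1` this determines `P` uniquely, and the equation for
`m = 0` reads `[Λ, P₁] = D - A = [Λ, -R]`.
-/

open Matrix PowerSeries

section PowerSeriesMatrix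
variable {ι R : Type*} [CommRing R]

theorem Matrix.ext_map_coeff {P Q : Matrix ι ι R⟦X⟧}
    (h : ∀ m, P.map (coeff m) = Q.map (coeff m)) : P = Q := by
  ext i j m
  exact congrFun₂ (h m) i j

theorem Matrix.map_coeff_of_mk (p : ℕ → Matrix ι ι R) (m : ℕ) :
    (of fun i j ↦ mk fun k ↦ p k i j).map (coeff m) = p m := by
  ext i j
  simp

theorem Matrix.map_coeff_map_C_mul [Fintype ι] (M : Matrix ι ι R) (P : Matrix ι ι R⟦X⟧) (m : ℕ) :
    (M.map C * P).map (coeff m) = M * P.map (coeff m) := by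
  ext i j
  simp [mul_apply, coeff_C_mul]

theorem Matrix.map_coeff_mul_map_C [Fintype ι] (M : Matrix ι ι R) (P : Matrix ι ι R⟦X⟧) (m : ℕ) :
    (P * M.map C).map (coeff m) = P.map (coeff m) * M := by
  ext i j
  simp [mul_apply, coeff_mul_C]

theorem Matrix.map_coeff_zero_X_smul (P : Matrix ι ι R⟦X⟧) :
    ((X : R⟦X⟧) • P).map (coeff 0) = 0 := by
  ext i j
  simp

theorem Matrix.map_coeff_succ_X_smul (P : Matrix ι ι R⟦X⟧) (m : ℕ) :
    ((X : R⟦X⟧) • P).map (coeff (m + 1)) = P.map (coeff m) := by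
  ext i j
  simp [coeff_succ_X_mul]

theorem Matrix.map_coeff_zero_X_sq_smul (P : Matrix ι ι R⟦X⟧) :
    ((X : R⟦X⟧) ^ 2 • P).map (coeff 0) = 0 := by
  ext i j
  simp

theorem Matrix.map_coeff_succ_X_sq_smul_derivative (P : Matrix ι ι R⟦X⟧) (m : ℕ) :
    ((X : R⟦X⟧) ^ 2 • P.map (derivative R)).map (coeff (m + 1)) = (m : R) • P.map (coeff m) := by
  ext i j
  rcases m with _ | m
  · simp only [zero_add, map_apply, Matrix.smul_apply, smul_eq_mul, coeff_X_pow_mul',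
      Nat.not_ofNat_le_one, ↓reduceIte, Nat.cast_zero, zero_mul]
  · simp [pow_two, mul_assoc, coeff_succ_X_mul, coeff_derivative, mul_comm]

end PowerSeriesMatrix

section CoefficientRecursion
variable {ι R : Type*} [Fintype ι] [CommRing R]

def SatisfiesCoeffRecursion (Λ A D : Matrix ι ι R) (p : ℕ → Matrix ι ι R) : Prop :=
  ∀ m : ℕ, (m : R) • p m = Λ * p (m + 1) - p (m + 1) * Λ + A * p m - p m * D

section
variable (Λ A D : Matrix ι ι R) (P : Matrix ι ι R⟦X⟧)

theorem Matrix.map_coeff_zero_linear_mul_sub_mul_linear :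
    ((Λ.map C + (X : R⟦X⟧) • A.map C) * P - P * (Λ.map C + (X : R⟦X⟧) • D.map C)).map (coeff 0)
      = Λ * P.map (coeff 0) - P.map (coeff 0) * Λ := by
  simp only [add_mul, mul_add, smul_mul_assoc, mul_smul_comm, Matrix.map_sub _ (map_sub (coeff 0)),
    Matrix.map_add _ (map_add (coeff 0)), map_coeff_map_C_mul, map_coeff_mul_map_C,
    map_coeff_zero_X_smul]
  abel

theorem Matrix.map_coeff_succ_linear_mul_sub_mul_linear (m : ℕ) :
    ((Λ.map C + (X : R⟦X⟧) • A.map C) * P - P * (Λ.map C + (X : R⟦X⟧) • D.map C)).map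
        (coeff (m + 1))
      = Λ * P.map (coeff (m + 1)) - P.map (coeff (m + 1)) * Λ + A * P.map (coeff m)
        - P.map (coeff m) * D := by
  simp only [add_mul, mul_add, smul_mul_assoc, mul_smul_comm, Matrix.map_sub _ (map_sub (coeff _)),
    Matrix.map_add _ (map_add (coeff _)), map_coeff_map_C_mul, map_coeff_mul_map_C,
    map_coeff_succ_X_smul]
  abel

theorem X_sq_smul_map_derivative_eq_iff :
    (X : R⟦X⟧) ^ 2 • P.map (derivative R) =
        (Λ.map C + (X : R⟦X⟧) • A.map C) * P - P * (Λ.map C + (X : R⟦X⟧) • D.map C) ↔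
      Λ * P.map (coeff 0) = P.map (coeff 0) * Λ ∧
        SatisfiesCoeffRecursion Λ A D fun m ↦ P.map (coeff m) := by
  refine ⟨fun h ↦ ⟨?_, fun m ↦ ?_⟩, fun ⟨h₀, h⟩ ↦ Matrix.ext_map_coeff ?_⟩
  · have h₀ := congrArg (Matrix.map · (coeff 0)) h
    simp only [map_coeff_zero_X_sq_smul, map_coeff_zero_linear_mul_sub_mul_linear] at h₀
    exact sub_eq_zero.mp h₀.symm
  · have hm := congrArg (Matrix.map · (coeff (m + 1))) h
    simpa only [map_coeff_succ_X_sq_smul_derivative, map_coeff_succ_linear_mul_sub_mul_linear]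
      using hm
  · refine Nat.and_forall_add_one.mp ⟨?_, fun m ↦ ?_⟩
    · rw [map_coeff_zero_X_sq_smul, map_coeff_zero_linear_mul_sub_mul_linear, h₀, sub_self]
    · rw [map_coeff_succ_X_sq_smul_derivative, map_coeff_succ_linear_mul_sub_mul_linear, h m]

end

variable [DecidableEq ι]

def IsFormalGaugeTransform (Λ A D : Matrix ι ι R) (P : Matrix ι ι R⟦X⟧) : Prop :=
  P.map constantCoeff = 1 ∧
    (X : R⟦X⟧) ^ 2 • P.map (derivative R) =
      (Λ.map C + (X : R⟦X⟧) • A.map C) * P - P * (Λ.map C + (X : R⟦X⟧) • D.map C)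

variable {Λ A D : Matrix ι ι R} {P : Matrix ι ι R⟦X⟧}

theorem isFormalGaugeTransform_iff :
    IsFormalGaugeTransform Λ A D P ↔
      P.map (coeff 0) = 1 ∧ SatisfiesCoeffRecursion Λ A D fun m ↦ P.map (coeff m) := by
  rw [IsFormalGaugeTransform, X_sq_smul_map_derivative_eq_iff, ← coeff_zero_eq_constantCoeff]
  constructor
  · rintro ⟨h₀, -, h⟩
    exact ⟨h₀, h⟩
  · rintro ⟨h₀, h⟩
    exact ⟨h₀, by rw [h₀, Matrix.one_mul, Matrix.mul_one], h⟩

theorem IsFormalGaugeTransform.commutator_map_coeff_one (hP : IsFormalGaugeTransform Λ A D P) :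
    Λ * P.map (coeff 1) - P.map (coeff 1) * Λ = D - A := by
  obtain ⟨h₀, h⟩ := isFormalGaugeTransform_iff.mp hP
  have h0 := h 0
  simp only [zero_add, h₀, Nat.cast_zero, zero_smul, Matrix.one_mul, Matrix.mul_one] at h0
  rw [← sub_eq_zero]
  convert h0.symm using 1
  abel

end CoefficientRecursion

section DiagonalRecursion
variable {ι K : Type*} [Fintype ι] [DecidableEq ι] [CommRing K] {lam d : ι → K} {A : Matrix ι ι K}

theorem Matrix.diagonal_mul_sub_mul_diagonal_apply (lam : ι → K) (Y : Matrix ι ι K) (i j : ι) :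
    (diagonal lam * Y - Y * diagonal lam) i j = (lam i - lam j) * Y i j := by
  simp only [sub_apply, diagonal_mul, mul_diagonal]
  ring

theorem Matrix.apply_eq_of_diagonal_commutator_eq [IsDomain K] (hlam : Function.Injective lam)
    {Y Z : Matrix ι ι K}
    (h : diagonal lam * Y - Y * diagonal lam = diagonal lam * Z - Z * diagonal lam)
    {i j : ι} (hij : i ≠ j) : Y i j = Z i j := by
  have hij' := congrFun₂ h i j
  rw [diagonal_mul_sub_mul_diagonal_apply, diagonal_mul_sub_mul_diagonal_apply] at hij'
  exact mul_left_cancel₀ (sub_ne_zero.mpr (hlam.ne hij)) hij'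

theorem Matrix.mul_sub_mul_diagonal_apply_self (hAd : ∀ i, A i i = d i) (Y : Matrix ι ι K)
    (i : ι) : (A * Y - Y * diagonal d) i i = ∑ k ∈ Finset.univ.erase i, A i k * Y k i := by
  rw [sub_apply, mul_apply, mul_diagonal, ← Finset.add_sum_erase _ _ (Finset.mem_univ i), hAd]
  ring

theorem satisfiesCoeffRecursion_diagonal_iff {p : ℕ → Matrix ι ι K} :
    SatisfiesCoeffRecursion (diagonal lam) A (diagonal d) p ↔
      ∀ (m : ℕ) (i j : ι), (m : K) * p m i j
        = (lam i - lam j) * p (m + 1) i j + (A * p m - p m * diagonal d) i j := by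
  refine forall_congr' fun m ↦ ?_
  rw [add_sub_assoc, ← Matrix.ext_iff]
  simp only [Matrix.add_apply, diagonal_mul_sub_mul_diagonal_apply, Matrix.smul_apply,
    smul_eq_mul]

theorem SatisfiesCoeffRecursion.apply_self (hAd : ∀ i, A i i = d i) {p : ℕ → Matrix ι ι K}
    (hp : SatisfiesCoeffRecursion (diagonal lam) A (diagonal d) p) (m : ℕ) (i : ι) :
    (m : K) * p m i i = ∑ k ∈ Finset.univ.erase i, A i k * p m k i := by
  rw [satisfiesCoeffRecursion_diagonal_iff.mp hp, sub_self, zero_mul, zero_add,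
    mul_sub_mul_diagonal_apply_self hAd]

theorem SatisfiesCoeffRecursion.eq_of_zero_eq [IsDomain K] [CharZero K]
    (hlam : Function.Injective lam) (hAd : ∀ i, A i i = d i) {p q : ℕ → Matrix ι ι K}
    (hp : SatisfiesCoeffRecursion (diagonal lam) A (diagonal d) p)
    (hq : SatisfiesCoeffRecursion (diagonal lam) A (diagonal d) q) (h₀ : p 0 = q 0) : p = q := by
  funext m
  induction m with
  | zero => exact h₀
  | succ m ih =>
    have hoff : ∀ i j, i ≠ j → p (m + 1) i j = q (m + 1) i j := by
      refine fun i j ↦ apply_eq_of_diagonal_commutator_eq hlam ?_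
      have hpq := hp m
      rw [ih, hq m] at hpq
      simpa only [add_sub_assoc, add_left_inj] using hpq.symm
    ext i j
    rcases eq_or_ne i j with rfl | hij
    · refine mul_left_cancel₀ (Nat.cast_ne_zero.mpr m.succ_ne_zero) ?_
      rw [hp.apply_self hAd, hq.apply_self hAd]
      exact Finset.sum_congr rfl fun k hk ↦ by rw [hoff k i (Finset.ne_of_mem_erase hk)]
    · exact hoff i j hij

end DiagonalRecursion

section Construction
variable {ι K : Type*} [Fintype ι] [DecidableEq ι] [Field K] {lam d : ι → K} {A : Matrix ι ι K}

variable (lam d A) in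
noncomputable def nextCoeffOffDiag (m : ℕ) (Q : Matrix ι ι K) : Matrix ι ι K :=
  of fun i j ↦
    if i = j then 0 else ((m : K) * Q i j - (A * Q - Q * diagonal d) i j) / (lam i - lam j)

variable (lam d A) in
noncomputable def formalSolutionCoeff : ℕ → Matrix ι ι K
  | 0 => 1
  | m + 1 =>
    let Y := nextCoeffOffDiag lam d A m (formalSolutionCoeff m)
    Y + diagonal fun i ↦ ((m : K) + 1)⁻¹ * ∑ k, A i k * Y k i

theorem formalSolutionCoeff_succ_apply_of_ne (hlam : Function.Injective lam) (m : ℕ) {i j : ι}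
    (hij : i ≠ j) :
    (lam i - lam j) * formalSolutionCoeff lam d A (m + 1) i j
      = (m : K) * formalSolutionCoeff lam d A m i j
        - (A * formalSolutionCoeff lam d A m - formalSolutionCoeff lam d A m * diagonal d) i j := by
  simp only [formalSolutionCoeff, nextCoeffOffDiag, Matrix.add_apply, of_apply, if_neg hij,
    diagonal_apply_ne _ hij, add_zero]
  exact mul_div_cancel₀ _ (sub_ne_zero.mpr (hlam.ne hij))

theorem formalSolutionCoeff_succ_apply_self [CharZero K] (m : ℕ) (i : ι) :
    ((m : K) + 1) * formalSolutionCoeff lam d A (m + 1) i i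
      = ∑ k ∈ Finset.univ.erase i, A i k * formalSolutionCoeff lam d A (m + 1) k i := by
  set Y := nextCoeffOffDiag lam d A m (formalSolutionCoeff lam d A m)
  have hc : formalSolutionCoeff lam d A (m + 1)
      = Y + diagonal fun i ↦ ((m : K) + 1)⁻¹ * ∑ k, A i k * Y k i := rfl
  have hY : Y i i = 0 := if_pos rfl
  rw [hc, Matrix.add_apply, diagonal_apply_eq, hY, zero_add,
    mul_inv_cancel_left₀ (by exact_mod_cast m.succ_ne_zero),
    ← Finset.sum_erase (f := fun k ↦ A i k * Y k i) _ (by rw [hY, mul_zero])]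
  refine Finset.sum_congr rfl fun k hk ↦ ?_
  rw [Matrix.add_apply, diagonal_apply_ne _ (Finset.ne_of_mem_erase hk), add_zero]

theorem satisfiesCoeffRecursion_formalSolutionCoeff [CharZero K] (hlam : Function.Injective lam)
    (hAd : ∀ i, A i i = d i) :
    SatisfiesCoeffRecursion (diagonal lam) A (diagonal d) (formalSolutionCoeff lam d A) := by
  refine satisfiesCoeffRecursion_diagonal_iff.mpr fun m i j ↦ ?_
  rcases eq_or_ne i j with rfl | hij
  · rw [sub_self, zero_mul, zero_add, mul_sub_mul_diagonal_apply_self hAd]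
    rcases m with _ | m
    · rw [Nat.cast_zero, zero_mul]
      refine (Finset.sum_eq_zero fun k hk ↦ ?_).symm
      rw [formalSolutionCoeff, one_apply_ne (Finset.ne_of_mem_erase hk), mul_zero]
    · exact_mod_cast formalSolutionCoeff_succ_apply_self m i
  · rw [formalSolutionCoeff_succ_apply_of_ne hlam m hij]
    ring

theorem existsUnique_isFormalGaugeTransform [CharZero K] (hlam : Function.Injective lam)
    (hAd : ∀ i, A i i = d i) :
    ∃! P, IsFormalGaugeTransform (diagonal lam) A (diagonal d) P := by
  have hc := satisfiesCoeffRecursion_formalSolutionCoeff hlam hAd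
  simp only [isFormalGaugeTransform_iff]
  refine ⟨of fun i j ↦ mk fun m ↦ formalSolutionCoeff lam d A m i j, ?_, fun Q ⟨hQ₀, hQ⟩ ↦ ?_⟩
  · simp only [map_coeff_of_mk]
    exact ⟨rfl, hc⟩
  · refine Matrix.ext_map_coeff fun m ↦ ?_
    rw [map_coeff_of_mk]
    exact congrFun (hQ.eq_of_zero_eq hlam hAd hc hQ₀) m

end Construction

theorem stmt4_general (n : ℕ) (lam : Fin n → ℂ) (hlam : Function.Injective lam)
    (d : Fin n → ℂ) (R : Matrix (Fin n) (Fin n) ℂ)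
    (Λ D A : Matrix (Fin n) (Fin n) ℂ)
    (hΛ : Λ = Matrix.diagonal lam) (hD : D = Matrix.diagonal d)
    (hA : A = D + (Λ * R - R * Λ)) :
    (∃! P : Matrix (Fin n) (Fin n) (PowerSeries ℂ),
      P.map (PowerSeries.constantCoeff (R := ℂ)) = 1 ∧
      (PowerSeries.X ^ 2 : PowerSeries ℂ) • P.map (PowerSeries.derivative ℂ) =
        (Λ.map (PowerSeries.C (R := ℂ)) + (PowerSeries.X : PowerSeries ℂ) • A.map (PowerSeries.C (R := ℂ))) * P
        - P * (Λ.map (PowerSeries.C (R := ℂ)) + (PowerSeries.X : PowerSeries ℂ) • D.map (PowerSeries.C (R := ℂ)))) ∧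
    (∀ P : Matrix (Fin n) (Fin n) (PowerSeries ℂ),
      P.map (PowerSeries.constantCoeff (R := ℂ)) = 1 →
      (PowerSeries.X ^ 2 : PowerSeries ℂ) • P.map (PowerSeries.derivative ℂ) =
        (Λ.map (PowerSeries.C (R := ℂ)) + (PowerSeries.X : PowerSeries ℂ) • A.map (PowerSeries.C (R := ℂ))) * P
        - P * (Λ.map (PowerSeries.C (R := ℂ)) + (PowerSeries.X : PowerSeries ℂ) • D.map (PowerSeries.C (R := ℂ))) →
      ∀ i j : Fin n, i ≠ j → PowerSeries.coeff (R := ℂ) 1 (P i j) = -R i j) := by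
  subst hΛ hD
  have hAd : ∀ i, A i i = d i := by simp [hA, mul_comm]
  have hcomm : diagonal d - A = diagonal lam * -R - -R * diagonal lam := by
    rw [hA]
    noncomm_ring
  refine ⟨existsUnique_isFormalGaugeTransform hlam hAd, fun P hP₀ hP i j hij ↦ ?_⟩
  have h₁ := IsFormalGaugeTransform.commutator_map_coeff_one ⟨hP₀, hP⟩
  rw [hcomm] at h₁
  exact apply_eq_of_diagonal_commutator_eq hlam h₁ hij

/-- Formal normal form: for `Λ` diagonal with pairwise distinct entries, `D` diagonal,
`R` with zero diagonal, and `A∞ = D + [Λ,R]`, there is a unique matrix `P̂` of formal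
power series with constant term `1` satisfying
`z² dP̂/dz = (Λ + z A∞) P̂ - P̂ (Λ + z D)`; moreover the off-diagonal part of the
coefficient of `z` in `P̂` is `-R`. -/
theorem stmt4 (n : ℕ) (hn : 1 ≤ n) (lam : Fin n → ℂ) (hlam : Function.Injective lam)
    (d : Fin n → ℂ) (R : Matrix (Fin n) (Fin n) ℂ) (hR : ∀ i, R i i = 0)
    (Λ D A : Matrix (Fin n) (Fin n) ℂ)
    (hΛ : Λ = Matrix.diagonal lam) (hD : D = Matrix.diagonal d)
    (hA : A = D + (Λ * R - R * Λ)) :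
    (∃! P : Matrix (Fin n) (Fin n) (PowerSeries ℂ),
      P.map (PowerSeries.constantCoeff (R := ℂ)) = 1 ∧
      (PowerSeries.X ^ 2 : PowerSeries ℂ) • P.map (PowerSeries.derivative ℂ) =
        (Λ.map (PowerSeries.C (R := ℂ)) + (PowerSeries.X : PowerSeries ℂ) • A.map (PowerSeries.C (R := ℂ))) * P
        - P * (Λ.map (PowerSeries.C (R := ℂ)) + (PowerSeries.X : PowerSeries ℂ) • D.map (PowerSeries.C (R := ℂ)))) ∧
    (∀ P : Matrix (Fin n) (Fin n) (PowerSeries ℂ),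
      P.map (PowerSeries.constantCoeff (R := ℂ)) = 1 →
      (PowerSeries.X ^ 2 : PowerSeries ℂ) • P.map (PowerSeries.derivative ℂ) =
        (Λ.map (PowerSeries.C (R := ℂ)) + (PowerSeries.X : PowerSeries ℂ) • A.map (PowerSeries.C (R := ℂ))) * P
        - P * (Λ.map (PowerSeries.C (R := ℂ)) + (PowerSeries.X : PowerSeries ℂ) • D.map (PowerSeries.C (R := ℂ))) →
      ∀ i j : Fin n, i ≠ j → PowerSeries.coeff (R := ℂ) 1 (P i j) = -R i j) :=
  stmt4_general n lam hlam d R Λ D A hΛ hD hA
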